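/- For real r > −1 and real p, σ, ℏ > 0, the Gaussian integral (σ/(ℏ√π)) ∫_{−∞}^{∞} |k|^r e^{−(σ/ℏ)²(k−p)²} dk equals (Γ((r+1)/2)/√π) · (ℏ/σ)^r · ₁F₁(−r/2, 1/2, −(σp/ℏ)²). -/

import Mathlib

/-!
Scaling `k = x / c` with `c = σ / ℏ` reduces the integral to `∫ |x| ^ r e^{-(x - q)²}` with
`q = σ p / ℏ`. Pairing `x` with `-x` turns this into `2 e^{-q²} ∫₀^∞ t ^ r e^{-t²} cosh (2 q t)`;
expanding `cosh` and integrating termwise against `∫₀^∞ t ^ s e^{-t²} = Γ((s + 1) / 2) / 2`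
(with `(2n)! = 4ⁿ n! (1/2)ₙ`) gives `Γ((r + 1) / 2) e^{-q²} ₁F₁((r + 1) / 2; 1/2; q²)`.
Kummer's transformation `e^{-z} ₁F₁(a; b; z) = ₁F₁(b - a; b; -z)`, whose coefficients match by
the Chu–Vandermonde identity, turns this into the right-hand side.
-/

open Finset

/-- Kummer's confluent hypergeometric function of the first kind (real version),
defined by its everywhere-convergent power series. -/
noncomputable def kummerM (a b z : ℝ) : ℝ :=
  ∑' n : ℕ, ((∏ i ∈ Finset.range n, (a + (i : ℝ))) /
      ((∏ i ∈ Finset.range n, (b + (i : ℝ))) * (n.factorial : ℝ))) * z ^ n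

open Polynomial MeasureTheory Set
open scoped Nat

theorem ascPochhammer_eval_eq_prod_range {R : Type*} [CommSemiring R] (n : ℕ) (a : R) :
    (ascPochhammer R n).eval a = ∏ i ∈ range n, (a + i) := by
  induction n with
  | zero => simp
  | succ n ih => rw [ascPochhammer_succ_eval, ih, prod_range_succ]

theorem ascPochhammer_eval_mul_eval_add_natCast {R : Type*} [CommSemiring R] (a : R) (n m : ℕ) :
    (ascPochhammer R n).eval a * (ascPochhammer R m).eval (a + n) =
      (ascPochhammer R (n + m)).eval a := by
  rw [← ascPochhammer_mul, eval_mul, eval_comp, eval_add, eval_X, eval_natCast]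

theorem descPochhammer_eval_add {R : Type*} [CommRing R] (r s : R) (n : ℕ) :
    (descPochhammer R n).eval (r + s) = ∑ ij ∈ antidiagonal n,
      n.choose ij.1 * ((descPochhammer R ij.1).eval r * (descPochhammer R ij.2).eval s) := by
  have h (k : ℕ) (x : R) : (descPochhammer R k).eval x = (descPochhammer ℤ k).smeval x := by
    rw [← descPochhammer_map (algebraMap ℤ R), eval_map_algebraMap, aeval_eq_smeval]
  simp only [h]
  exact Ring.descPochhammer_smeval_add n (Commute.all r s)

/-- `₂F₁(-n, a; b; 1) = (b - a)ₙ / (b)ₙ`, with the denominators cleared. -/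
theorem sum_antidiagonal_choose_mul_ascPochhammer_eval {R : Type*} [CommRing R] (a b : R)
    (n : ℕ) : ∑ ij ∈ antidiagonal n, n.choose ij.1 *
      ((-1) ^ ij.1 * (ascPochhammer R ij.1).eval a * (ascPochhammer R ij.2).eval (b + ij.1)) =
      (ascPochhammer R n).eval (b - a) := by
  have hneg (i : ℕ) : (descPochhammer R i).eval (-a) = (-1) ^ i * (ascPochhammer R i).eval a := by
    have := ascPochhammer_eval_neg_eq_descPochhammer R (-a) i
    rw [neg_neg] at this
    rw [this, ← mul_assoc, ← mul_pow, neg_one_mul, neg_neg, one_pow, one_mul]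
  have hshift : ∀ ij ∈ antidiagonal n,
      (descPochhammer R ij.2).eval (b + n - 1) = (ascPochhammer R ij.2).eval (b + ij.1) := by
    rintro ⟨i, j⟩ hij
    rw [HasAntidiagonal.mem_antidiagonal] at hij
    rw [descPochhammer_eval_eq_ascPochhammer, ← hij, Nat.cast_add]
    ring_nf
  calc _ = ∑ ij ∈ antidiagonal n, n.choose ij.1 *
        ((descPochhammer R ij.1).eval (-a) * (descPochhammer R ij.2).eval (b + n - 1)) :=
        sum_congr rfl fun ij hij => by rw [hneg, hshift ij hij, mul_assoc]
    _ = (descPochhammer R n).eval (-a + (b + n - 1)) := (descPochhammer_eval_add _ _ n).symm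
    _ = _ := by rw [descPochhammer_eval_eq_ascPochhammer]; ring_nf

theorem abs_ascPochhammer_eval_le {a b : ℝ} (hb : 0 < b) (n : ℕ) :
    |(ascPochhammer ℝ n).eval a| ≤ (|a| / b + 1) ^ n * (ascPochhammer ℝ n).eval b := by
  rw [ascPochhammer_eval_eq_prod_range, ascPochhammer_eval_eq_prod_range, abs_prod,
    ← card_range n, ← prod_const, card_range, ← prod_mul_distrib]
  refine prod_le_prod (fun _ _ => abs_nonneg _) fun i _ => ?_
  have hi : (0 : ℝ) ≤ i := i.cast_nonneg
  calc |a + i| ≤ |a| + i := by simpa [abs_of_nonneg hi] using abs_add_le a i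
    _ ≤ (|a| / b + 1) * (b + i) := by
      have : (|a| / b + 1) * (b + i) = |a| + |a| / b * i + b + i := by field_simp; ring
      nlinarith [div_nonneg (abs_nonneg a) hb.le]

noncomputable def kummerCoeff (a b : ℝ) (n : ℕ) : ℝ :=
  (ascPochhammer ℝ n).eval a / ((ascPochhammer ℝ n).eval b * n !)

theorem kummerM_eq_tsum (a b z : ℝ) : kummerM a b z = ∑' n, kummerCoeff a b n * z ^ n := by
  simp only [kummerM, kummerCoeff, ascPochhammer_eval_eq_prod_range]

theorem summable_norm_kummerCoeff_mul_pow (a : ℝ) {b : ℝ} (hb : 0 < b) (z : ℝ) :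
    Summable fun n => ‖kummerCoeff a b n * z ^ n‖ := by
  refine .of_nonneg_of_le (fun n => norm_nonneg _) (fun n => ?_)
    (Real.summable_pow_div_factorial ((|a| / b + 1) * |z|))
  have hpos := ascPochhammer_pos n b hb
  rw [kummerCoeff, norm_mul, norm_div, norm_mul, Real.norm_of_nonneg hpos.le, norm_pow,
    Real.norm_natCast, Real.norm_eq_abs, Real.norm_eq_abs, mul_pow, div_mul_eq_mul_div,
    div_le_div_iff₀ (by positivity) (by positivity)]
  calc |(ascPochhammer ℝ n).eval a| * |z| ^ n * n !
      ≤ (|a| / b + 1) ^ n * (ascPochhammer ℝ n).eval b * |z| ^ n * n ! := by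
        gcongr; exact abs_ascPochhammer_eval_le hb n
    _ = _ := by ring

theorem sum_antidiagonal_kummerCoeff_mul_expCoeff (a : ℝ) {b : ℝ} (hb : 0 < b) (z : ℝ) (n : ℕ) :
    ∑ ij ∈ antidiagonal n, kummerCoeff a b ij.1 * z ^ ij.1 * ((-z) ^ ij.2 / ij.2 !) =
      kummerCoeff (b - a) b n * (-z) ^ n := by
  unfold kummerCoeff
  rw [← sum_antidiagonal_choose_mul_ascPochhammer_eval a b n, sum_div, sum_mul]
  refine sum_congr rfl fun ij hij => ?_
  obtain ⟨i, j⟩ := ij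
  rw [HasAntidiagonal.mem_antidiagonal] at hij
  subst hij
  have hb_i := ascPochhammer_pos i b hb
  have hb_j := ascPochhammer_pos j (b + i) (by positivity)
  have hchoose : ((i + j).choose i : ℝ) ≠ 0 := by
    exact_mod_cast (Nat.choose_pos (Nat.le_add_right i j)).ne'
  have hsq : ((-1 : ℝ) ^ i) ^ 2 = 1 := by rw [← pow_mul, Even.neg_one_pow ⟨i, by ring⟩]
  have hfact : ((i + j)! : ℝ) = (i + j).choose i * i ! * j ! := by
    rw [← Nat.choose_mul_factorial_mul_factorial (Nat.le_add_right i j), Nat.add_sub_cancel_left]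
    push_cast; ring
  rw [← ascPochhammer_eval_mul_eval_add_natCast, hfact, pow_add, neg_pow z i]
  field_simp
  rw [hsq, mul_one]

theorem kummerM_mul_exp_neg (a : ℝ) {b : ℝ} (hb : 0 < b) (z : ℝ) :
    kummerM a b z * Real.exp (-z) = kummerM (b - a) b (-z) := by
  have hexp : Summable fun n => ‖(-z) ^ n / (n ! : ℝ)‖ := by
    simpa [norm_div, norm_pow] using Real.summable_pow_div_factorial |z|
  rw [kummerM_eq_tsum, kummerM_eq_tsum, Real.exp_eq_exp_ℝ,
    ← (NormedSpace.expSeries_div_hasSum_exp (-z)).tsum_eq,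
    tsum_mul_tsum_eq_tsum_sum_antidiagonal_of_summable_norm
      (summable_norm_kummerCoeff_mul_pow a hb z) hexp]
  exact tsum_congr (sum_antidiagonal_kummerCoeff_mul_expCoeff a hb z)

theorem Real.Gamma_add_nat_eq {a : ℝ} (ha : 0 < a) (n : ℕ) :
    Real.Gamma (a + n) = Real.Gamma a * (ascPochhammer ℝ n).eval a := by
  induction n with
  | zero => simp
  | succ n ih =>
    rw [Nat.cast_succ, ← add_assoc, Real.Gamma_add_one (by positivity), ih, ascPochhammer_succ_eval]
    ring

theorem Nat.cast_factorial_two_mul (n : ℕ) :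
    ((2 * n)! : ℝ) = 4 ^ n * n ! * (ascPochhammer ℝ n).eval (1 / 2) := by
  induction n with
  | zero => simp
  | succ n ih =>
    rw [show 2 * (n + 1) = 2 * n + 1 + 1 by ring, Nat.factorial_succ, Nat.factorial_succ,
      Nat.factorial_succ, ascPochhammer_succ_eval]
    push_cast
    rw [ih]
    ring

theorem four_pow_mul_Gamma_add_nat_div_factorial_two_mul {a : ℝ} (ha : 0 < a) (n : ℕ) :
    4 ^ n * Real.Gamma (a + n) / (2 * n)! = Real.Gamma a * kummerCoeff a (1 / 2) n := by
  have := ascPochhammer_pos n (1 / 2 : ℝ) (by norm_num)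
  rw [Real.Gamma_add_nat_eq ha, Nat.cast_factorial_two_mul, kummerCoeff]
  field_simp

theorem integrable_comp_abs {f : ℝ → ℝ} (hf : IntegrableOn f (Ioi 0)) :
    Integrable fun x => f |x| := by
  have hIoi : IntegrableOn (fun x => f |x|) (Ioi 0) :=
    hf.congr_fun (fun x hx => by rw [abs_of_pos hx]) measurableSet_Ioi
  have hIic : IntegrableOn (fun x => f |x|) (Iic 0) := by
    have hneg : MeasurableEmbedding fun x : ℝ => -x := (Homeomorph.neg ℝ).measurableEmbedding
    rw [← Measure.map_neg_eq_self (volume : Measure ℝ), hneg.integrableOn_map_iff]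
    simp_rw [Function.comp_def, abs_neg, neg_preimage, neg_Iic, neg_zero]
    exact (integrableOn_Ici_iff_integrableOn_Ioi (by simp)).2 hIoi
  rw [← integrableOn_univ, ← Iic_union_Ioi (a := (0 : ℝ))]
  exact hIic.union hIoi

theorem integrable_abs_rpow_mul_exp_neg_sq_sub {r : ℝ} (hr : -1 < r) (q : ℝ) :
    Integrable fun x => |x| ^ r * Real.exp (-(x - q) ^ 2) := by
  have hdom : Integrable fun x => Real.exp (q ^ 2) * (|x| ^ r * Real.exp (-(1 / 2) * |x| ^ 2)) :=
    (integrable_comp_abs (integrableOn_rpow_mul_exp_neg_mul_sq (by norm_num) hr)).const_mul _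
  refine hdom.mono' (by fun_prop) (Filter.Eventually.of_forall fun x => ?_)
  rw [Real.norm_of_nonneg (by positivity), sq_abs, mul_left_comm, ← Real.exp_add]
  gcongr
  nlinarith [sq_nonneg (x - 2 * q)]

theorem integral_abs_rpow_mul_exp_neg_sq_sub_eq_cosh {r : ℝ} (hr : -1 < r) (q : ℝ) :
    ∫ x, |x| ^ r * Real.exp (-(x - q) ^ 2) =
      2 * Real.exp (-q ^ 2) * ∫ t in Ioi 0, t ^ r * Real.exp (-t ^ 2) * Real.cosh (2 * q * t) := by
  set f : ℝ → ℝ := fun x => |x| ^ r * Real.exp (-(x - q) ^ 2)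
  have hf := integrable_abs_rpow_mul_exp_neg_sq_sub hr q
  have hsymm (x : ℝ) : f x + f (-x) =
      2 * Real.exp (-q ^ 2) * (|x| ^ r * Real.exp (-|x| ^ 2) * Real.cosh (2 * q * |x|)) := by
    have hcosh : Real.cosh (2 * q * |x|) = Real.cosh (2 * q * x) := by
      rcases abs_choice x with h | h <;> simp [h]
    simp only [f, hcosh, Real.cosh_eq, abs_neg, sq_abs]
    rw [show -(x - q) ^ 2 = -x ^ 2 + -q ^ 2 + 2 * q * x by ring,
      show -(-x - q) ^ 2 = -x ^ 2 + -q ^ 2 + -(2 * q * x) by ring]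
    simp only [Real.exp_add]
    ring
  have htwice : ∫ x, (f x + f (-x)) = 2 * ∫ x, f x := by
    rw [integral_add hf hf.comp_neg, integral_neg_eq_self f volume]
    ring
  have := integral_comp_abs (f := fun t => t ^ r * Real.exp (-t ^ 2) * Real.cosh (2 * q * t))
  simp only [hsymm, integral_const_mul, this] at htwice
  linear_combination -htwice / 2

theorem integral_Ioi_rpow_mul_exp_neg_sq {s : ℝ} (hs : -1 < s) :
    ∫ t in Ioi 0, t ^ s * Real.exp (-t ^ 2) = Real.Gamma ((s + 1) / 2) / 2 := by
  simpa [Real.rpow_two, div_eq_inv_mul] using integral_rpow_mul_exp_neg_rpow two_pos hs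

theorem integral_Ioi_rpow_mul_exp_neg_sq_mul_cosh {r : ℝ} (hr : -1 < r) (q : ℝ) :
    ∫ t in Ioi 0, t ^ r * Real.exp (-t ^ 2) * Real.cosh (2 * q * t) =
      Real.Gamma ((r + 1) / 2) / 2 * kummerM ((r + 1) / 2) (1 / 2) (q ^ 2) := by
  set F : ℕ → ℝ → ℝ := fun n t => t ^ r * Real.exp (-t ^ 2) * ((2 * q * t) ^ (2 * n) / (2 * n)!)
  have hF_eq (n : ℕ) : EqOn (F n)
      (fun t => (2 * q) ^ (2 * n) / (2 * n)! * (t ^ (r + (2 * n : ℕ)) * Real.exp (-t ^ 2)))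
      (Ioi 0) := fun t ht => by
    simp only [F, Real.rpow_add ht, Real.rpow_natCast, mul_pow]
    ring
  have hF_int (n : ℕ) : IntegrableOn (F n) (Ioi 0) := by
    have hpow : IntegrableOn (fun t => t ^ (r + (2 * n : ℕ)) * Real.exp (-t ^ 2)) (Ioi 0) := by
      simpa using integrableOn_rpow_mul_exp_neg_mul_sq one_pos (s := r + (2 * n : ℕ))
        (by push_cast; linarith [Nat.cast_nonneg (α := ℝ) n])
    exact IntegrableOn.congr_fun (Integrable.const_mul hpow _) (hF_eq n).symm measurableSet_Ioi
  have hF_integral (n : ℕ) : ∫ t in Ioi 0, F n t =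
      Real.Gamma ((r + 1) / 2) / 2 * (kummerCoeff ((r + 1) / 2) (1 / 2) n * (q ^ 2) ^ n) := by
    rw [setIntegral_congr_fun measurableSet_Ioi (hF_eq n), integral_const_mul,
      integral_Ioi_rpow_mul_exp_neg_sq (by push_cast; linarith [Nat.cast_nonneg (α := ℝ) n]),
      show (r + ((2 * n : ℕ) : ℝ) + 1) / 2 = (r + 1) / 2 + n by push_cast; ring, mul_pow,
      pow_mul, pow_mul]
    linear_combination (q ^ 2) ^ n / 2 *
      four_pow_mul_Gamma_add_nat_div_factorial_two_mul (a := (r + 1) / 2) (by linarith) n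
  have hF_nonneg (n : ℕ) : ∀ t ∈ Ioi (0 : ℝ), 0 ≤ F n t := fun t ht =>
    mul_nonneg (mul_nonneg (Real.rpow_nonneg (le_of_lt ht) r) (Real.exp_nonneg _))
      (div_nonneg ((even_two_mul n).pow_nonneg _) (Nat.cast_nonneg _))
  have hsum : Summable fun n => ∫ t in Ioi 0, ‖F n t‖ := by
    have (n : ℕ) : ∫ t in Ioi 0, ‖F n t‖ = ∫ t in Ioi 0, F n t :=
      setIntegral_congr_fun measurableSet_Ioi fun t ht => Real.norm_of_nonneg (hF_nonneg n t ht)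
    simp only [this, hF_integral]
    exact (summable_norm_kummerCoeff_mul_pow _ (by norm_num) (q ^ 2)).of_norm.mul_left _
  calc _ = ∫ t in Ioi 0, ∑' n, F n t := by
        simp only [F, tsum_mul_left, ← Real.cosh_eq_tsum]
    _ = ∑' n, ∫ t in Ioi 0, F n t := (integral_tsum_of_summable_integral_norm hF_int hsum).symm
    _ = _ := by rw [tsum_congr hF_integral, tsum_mul_left, kummerM_eq_tsum]

theorem integral_abs_rpow_mul_exp_neg_sq_sub {r : ℝ} (hr : -1 < r) (q : ℝ) :
    ∫ x, |x| ^ r * Real.exp (-(x - q) ^ 2) =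
      Real.Gamma ((r + 1) / 2) * kummerM (-r / 2) (1 / 2) (-q ^ 2) := by
  rw [integral_abs_rpow_mul_exp_neg_sq_sub_eq_cosh hr, integral_Ioi_rpow_mul_exp_neg_sq_mul_cosh hr,
    show -r / 2 = 1 / 2 - (r + 1) / 2 by ring, ← kummerM_mul_exp_neg _ one_half_pos]
  ring

theorem integral_abs_rpow_mul_exp_neg_mul_sq_sub {r c : ℝ} (hr : -1 < r) (hc : 0 < c) (p : ℝ) :
    ∫ k, |k| ^ r * Real.exp (-c ^ 2 * (k - p) ^ 2) =
      c⁻¹ ^ r * c⁻¹ * Real.Gamma ((r + 1) / 2) * kummerM (-r / 2) (1 / 2) (-(c * p) ^ 2) := by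
  have hscale := Measure.integral_comp_mul_left
    (fun x => |x| ^ r * Real.exp (-(x - c * p) ^ 2)) c
  have h (k : ℝ) : |c * k| ^ r * Real.exp (-(c * k - c * p) ^ 2) =
      c ^ r * (|k| ^ r * Real.exp (-c ^ 2 * (k - p) ^ 2)) := by
    rw [abs_mul, abs_of_pos hc, Real.mul_rpow hc.le (abs_nonneg k)]
    ring_nf
  simp only [h, integral_const_mul, integral_abs_rpow_mul_exp_neg_sq_sub hr, smul_eq_mul,
    abs_inv, abs_of_pos hc] at hscale
  have hcr : c ^ r ≠ 0 := (Real.rpow_pos_of_pos hc r).ne'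
  rw [← inv_mul_cancel_left₀ hcr (∫ k, _), hscale, Real.inv_rpow hc.le]
  ring

/-- The Gaussian fractional-moment integral (expectation value of |p̂|^r in a
harmonic-oscillator coherent state) expressed via a Kummer function. -/
theorem gaussian_fractional_moment (r p σ ℏ : ℝ) (hr : -1 < r) (hσ : 0 < σ) (hℏ : 0 < ℏ) :
    (σ / (ℏ * Real.sqrt Real.pi)) *
      ∫ k : ℝ, |k| ^ r * Real.exp (-(σ / ℏ) ^ 2 * (k - p) ^ 2)
    = (Real.Gamma ((r + 1) / 2) / Real.sqrt Real.pi) * (ℏ / σ) ^ r *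
        kummerM (-r / 2) (1 / 2) (-(σ * p / ℏ) ^ 2) := by
  rw [integral_abs_rpow_mul_exp_neg_mul_sq_sub hr (div_pos hσ hℏ), inv_div, div_mul_eq_mul_div]
  field_simp
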